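/- CR reduction preserves types (subject reduction for CR): if e : σ in CR and e reduces to e′ by the CR reduction rules (including congruence closure), then e′ : σ. -/
import Mathlib


inductive Ty : Type
  | bool | unit | term
  | arrow : Ty → Ty → Ty
deriving DecidableEq

inductive Exp : Type
  | I : Ty → Exp
  | K : Ty → Ty → Exp
  | S : Ty → Ty → Ty → Exp
  | value : Ty → Exp
  | lift : Exp
  | app : Exp
  | ap : Exp → Exp → Exp
  | quot : Exp → Exp
deriving DecidableEq

/-- Typing rules of Combinatory ReFLect (Figure 1). -/
inductive HasType : Exp → Ty → Prop
  | I (σ) : HasType (.I σ) (.arrow σ σ)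
  | K (σ τ) : HasType (.K σ τ) (.arrow σ (.arrow τ σ))
  | S (σ τ υ) : HasType (.S σ τ υ)
      (.arrow (.arrow σ (.arrow τ υ)) (.arrow (.arrow σ τ) (.arrow σ υ)))
  | value (σ) : HasType (.value σ) (.arrow .term σ)
  | lift : HasType .lift (.arrow .term .term)
  | app : HasType .app (.arrow .term (.arrow .term .term))
  | ap {e₁ e₂ σ τ} : HasType e₁ (.arrow σ τ) → HasType e₂ σ → HasType (.ap e₁ e₂) τ
  | quot {e σ} : HasType e σ → HasType (.quot e) .term

/-- Single-step reduction of CR (Figure 2), closed under congruence. -/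
inductive Step : Exp → Exp → Prop
  | I {σ e} : Step (.ap (.I σ) e) e
  | K {σ τ e₁ e₂} : Step (.ap (.ap (.K σ τ) e₁) e₂) e₁
  | S {σ τ υ e₁ e₂ e₃} :
      Step (.ap (.ap (.ap (.S σ τ υ) e₁) e₂) e₃) (.ap (.ap e₁ e₃) (.ap e₂ e₃))
  | value {σ e} : HasType e σ → Step (.ap (.value σ) (.quot e)) e
  | lift {s} : Step (.ap .lift (.quot s)) (.quot (.quot s))
  | app {e₁ e₂ τ} : HasType (.ap e₁ e₂) τ →
      Step (.ap (.ap .app (.quot e₁)) (.quot e₂)) (.quot (.ap e₁ e₂))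
  | apL {a a' b} : Step a a' → Step (.ap a b) (.ap a' b)
  | apR {a b b'} : Step b b' → Step (.ap a b) (.ap a b')

/-- Reflexive-transitive (congruent) closure of reduction. -/
def Reduces : Exp → Exp → Prop := Relation.ReflTransGen Step

/-- Reduction in one or more steps. -/
def ReducesPlus : Exp → Exp → Prop := Relation.TransGen Step

/-- f = S_{term,term,term} app lift -/
def fTerm : Exp := .ap (.ap (.S .term .term .term) .app) .lift

/-- g = S (K value_term) (S (K f) I), with appropriate type subscripts. -/
def gTerm : Exp :=
  .ap (.ap (.S .term .term .term) (.ap (.K (.arrow .term .term) .term) (.value .term)))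
      (.ap (.ap (.S .term .term .term) (.ap (.K (.arrow .term .term) .term) fTerm)) (.I .term))

/-- subject reduction for CR. -/
theorem cr_subject_reduction {e e' : Exp} {σ : Ty}
    (ht : HasType e σ) (hs : Step e e') : HasType e' σ := by
  induction hs generalizing σ with
  | I => rcases ht with _ | _ | _ | _ | _ | _ | ⟨hI, he⟩; cases hI; exact he
  | K =>
    rcases ht with _|_|_|_|_|_|⟨h1,h2⟩
    rcases h1 with _|_|_|_|_|_|⟨hK,he⟩
    cases hK; exact he
  | S =>
    rcases ht with _|_|_|_|_|_|⟨h1,h3⟩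
    rcases h1 with _|_|_|_|_|_|⟨h2,h2'⟩
    rcases h2 with _|_|_|_|_|_|⟨hS,h1'⟩
    cases hS; exact .ap (.ap h1' h3) (.ap h2' h3)
  | value hty =>
    rcases ht with _|_|_|_|_|_|⟨hv,hq⟩
    cases hv
    exact hty
  | lift =>
    rcases ht with _|_|_|_|_|_|⟨hl,hq⟩
    cases hl; exact .quot hq
  | app hty =>
    rcases ht with _|_|_|_|_|_|⟨h1,h2⟩
    rcases h1 with _|_|_|_|_|_|⟨ha,hq1⟩
    cases ha
    rcases hty with _|_|_|_|_|_|⟨t1,t2⟩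
    exact .quot (.ap t1 t2)
  | apL _ ih =>
    rcases ht with _|_|_|_|_|_|⟨h1,h2⟩
    exact .ap (ih h1) h2
  | apR _ ih =>
    rcases ht with _|_|_|_|_|_|⟨h1,h2⟩
    exact .ap h1 (ih h2)
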